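/- Let H = C_{ℓ₁} □ ⋯ □ C_{ℓₖ} with all ℓᵢ even, ℓᵢ ≥ 6 for all i, and k ≥ 2. Set u₀ = 0, and suppose f is a graph homomorphism from H to H with f(u₀) = u₀ such that dist(u₀, f(v)) = dist(u₀, v) for all vertices v, f(e_{i₁}) = e₁ for some index i₁, the neighbors of e_{i₁} are mapped bijectively to the neighbors of e₁, and f(e_{i₁} + e_{i₁}) = e₁ + e₁. Then for all r with 1 ≤ r ≤ ℓ_{i₁}/2, f(r·e_{i₁}) = r·e₁. -/
import Mathlib

/-- The cycle `C_ℓ` on `ZMod ℓ`: `u` adjacent to `v` iff `u - v = ±1`. -/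
def cycleGraph (ℓ : ℕ) : SimpleGraph (ZMod ℓ) :=
  SimpleGraph.fromRel (fun u v => u - v = 1)

/-- The `i`-th unit vector in `ℤ_{ℓ 0} × ⋯ × ℤ_{ℓ (k-1)}`. -/
def unitVec {k : ℕ} (ℓ : Fin k → ℕ) (i : Fin k) : ∀ j, ZMod (ℓ j) :=
  fun j => if j = i then 1 else 0

/-- The toroidal grid: two vertices are adjacent iff their difference is `±eᵢ`. -/
def torusGraph {k : ℕ} (ℓ : Fin k → ℕ) : SimpleGraph (∀ j, ZMod (ℓ j)) :=
  SimpleGraph.fromRel (fun u v => ∃ i, u - v = unitVec ℓ i)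

open SimpleGraph Finset

namespace TorusAux

/-- cyclic distance from `0` in `ZMod n` -/
def cyc {n : ℕ} (a : ZMod n) : ℕ := min a.val (n - a.val)

variable {k : ℕ}

/-- single-coordinate vector with an integer entry -/
def sg (ℓ : Fin k → ℕ) (a : Fin k) (ε : ℤ) : ∀ j, ZMod (ℓ j) :=
  Pi.single a (ε : ZMod (ℓ a))

/-- ℓ¹-type potential -/
def phi (ℓ : Fin k → ℕ) (v : ∀ j, ZMod (ℓ j)) : ℕ := ∑ i, cyc (v i)

variable {ℓ : Fin k → ℕ}

lemma zmod_inj {n : ℕ} (h6 : 6 ≤ n) {x y : ℤ} (h : (x : ZMod n) = (y : ZMod n))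
    (hx : x.natAbs ≤ 2) (hy : y.natAbs ≤ 2) : x = y := by
  haveI : NeZero n := ⟨by omega⟩
  have h1 : ((x - y : ℤ) : ZMod n) = 0 := by push_cast; rw [h]; ring
  have h2 : (n : ℤ) ∣ (x - y) := by rwa [ZMod.intCast_zmod_eq_zero_iff_dvd] at h1
  have h3 : |x - y| < (n : ℤ) := by rw [abs_lt]; constructor <;> omega
  have := Int.eq_zero_of_abs_lt_dvd h2 h3
  omega

lemma zmod_cast_ne {n : ℕ} (h6 : 6 ≤ n) {x y : ℤ} (hx : x.natAbs ≤ 2) (hy : y.natAbs ≤ 2)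
    (hxy : x ≠ y) : (x : ZMod n) ≠ (y : ZMod n) :=
  fun h => hxy (zmod_inj h6 h hx hy)

lemma natAbs_sign {ε : ℤ} (hε : ε = 1 ∨ ε = -1) : ε.natAbs ≤ 2 := by rcases hε with rfl | rfl <;> simp

/-! ### cyc lemmas -/

lemma cyc_zero {n : ℕ} : cyc (0 : ZMod n) = 0 := by
  unfold cyc
  cases n <;> simp

lemma cyc_cast_le {n : ℕ} [NeZero n] (m : ℕ) : cyc ((m : ZMod n)) ≤ m := by
  unfold cyc
  rw [ZMod.val_natCast]
  have := Nat.mod_le m n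
  omega

lemma cyc_cast {n : ℕ} [NeZero n] {m : ℕ} (h : 2 * m ≤ n) : cyc ((m : ZMod n)) = m := by
  have hn : 0 < n := Nat.pos_of_ne_zero (NeZero.ne n)
  have hm : m < n := by omega
  unfold cyc
  rw [ZMod.val_cast_of_lt hm]
  omega

lemma cyc_neg {n : ℕ} [NeZero n] (a : ZMod n) : cyc (-a) = cyc a := by
  have h2 := ZMod.val_lt a
  unfold cyc
  rw [ZMod.neg_val]
  split
  · next h => rw [h, ZMod.val_zero]
  · omega

lemma cyc_sign {n : ℕ} (h6 : 6 ≤ n) {ε : ℤ} (hε : ε = 1 ∨ ε = -1) :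
    cyc ((ε : ZMod n)) = 1 := by
  haveI : NeZero n := ⟨by omega⟩
  haveI : Fact (1 < n) := ⟨by omega⟩
  rcases hε with rfl | rfl
  · rw [Int.cast_one]
    unfold cyc; rw [ZMod.val_one]; omega
  · have h1 : (((-1 : ℤ)) : ZMod n) = -(1 : ZMod n) := by push_cast; ring
    rw [h1, cyc_neg]
    unfold cyc; rw [ZMod.val_one]; omega

lemma val_one' {n : ℕ} (h6 : 6 ≤ n) : (1 : ZMod n).val = 1 := by
  haveI : Fact (1 < n) := ⟨by omega⟩
  exact ZMod.val_one n

lemma val_add_one {n : ℕ} (h6 : 6 ≤ n) (a : ZMod n) :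
    (a + 1).val = if a.val + 1 = n then 0 else a.val + 1 := by
  haveI : NeZero n := ⟨by omega⟩
  have h := ZMod.val_lt a
  rw [ZMod.val_add, val_one' h6]
  by_cases hc : a.val + 1 = n
  · rw [if_pos hc, hc, Nat.mod_self]
  · rw [if_neg hc, Nat.mod_eq_of_lt (by omega)]

lemma val_sub_one {n : ℕ} (h6 : 6 ≤ n) (a : ZMod n) :
    (a - 1).val = if a.val = 0 then n - 1 else a.val - 1 := by
  haveI : NeZero n := ⟨by omega⟩
  have h := ZMod.val_lt a
  have hne : (1 : ZMod n) ≠ 0 := by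
    intro hh
    have := val_one' h6
    rw [hh, ZMod.val_zero] at this
    omega
  have h1 : a - 1 = a + (-1) := by ring
  rw [h1, ZMod.val_add, ZMod.neg_val, if_neg hne, val_one' h6]
  by_cases hc : a.val = 0
  · rw [if_pos hc, hc, Nat.mod_eq_of_lt (by omega)]
    omega
  · rw [if_neg hc]
    have h2 : a.val + (n - 1) = n + (a.val - 1) := by omega
    rw [h2, Nat.add_mod_left, Nat.mod_eq_of_lt (by omega)]

lemma cyc_add_one_le {n : ℕ} (h6 : 6 ≤ n) (a : ZMod n) : cyc (a + 1) ≤ cyc a + 1 := by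
  haveI : NeZero n := ⟨by omega⟩
  have h := ZMod.val_lt a
  unfold cyc
  rw [val_add_one h6]
  split <;> omega

lemma cyc_sub_one_le {n : ℕ} (h6 : 6 ≤ n) (a : ZMod n) : cyc (a - 1) ≤ cyc a + 1 := by
  haveI : NeZero n := ⟨by omega⟩
  have h := ZMod.val_lt a
  unfold cyc
  rw [val_sub_one h6]
  split <;> omega

lemma cyc_sub_sign_le {n : ℕ} (h6 : 6 ≤ n) {ε : ℤ} (hε : ε = 1 ∨ ε = -1) (a : ZMod n) :
    cyc (a - (ε : ZMod n)) ≤ cyc a + 1 := by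
  rcases hε with rfl | rfl
  · have h1 : a - ((1:ℤ) : ZMod n) = a - 1 := by push_cast; ring
    rw [h1]; exact cyc_sub_one_le h6 a
  · have h1 : a - (((-1):ℤ) : ZMod n) = a + 1 := by push_cast; ring
    rw [h1]; exact cyc_add_one_le h6 a

/-! ### sg lemmas -/

lemma sg_apply_same (a : Fin k) (ε : ℤ) : sg ℓ a ε a = ((ε : ℤ) : ZMod (ℓ a)) :=
  Pi.single_eq_same a _

lemma sg_apply_ne {a c : Fin k} (h : c ≠ a) (ε : ℤ) : sg ℓ a ε c = 0 :=
  Pi.single_eq_of_ne h _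

lemma sg_add (a : Fin k) (x y : ℤ) : sg ℓ a x + sg ℓ a y = sg ℓ a (x + y) := by
  unfold sg
  rw [← Pi.single_add]
  congr 1
  push_cast
  ring

lemma sg_sub (a : Fin k) (x y : ℤ) : sg ℓ a x - sg ℓ a y = sg ℓ a (x - y) := by
  unfold sg
  rw [← Pi.single_sub]
  congr 1
  push_cast
  ring

lemma sg_neg (a : Fin k) (x : ℤ) : sg ℓ a (-x) = -sg ℓ a x := by
  unfold sg
  rw [← Pi.single_neg]
  congr 1
  push_cast
  ring

lemma sg_zero (a : Fin k) : sg ℓ a 0 = 0 := by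
  unfold sg
  rw [Int.cast_zero, Pi.single_zero]

/-! ### phi lemmas -/

lemma phi_zero : phi ℓ 0 = 0 := by
  unfold phi
  exact Finset.sum_eq_zero (fun i _ => by rw [Pi.zero_apply, cyc_zero])

lemma phi_single (i : Fin k) (x : ZMod (ℓ i)) : phi ℓ (Pi.single i x) = cyc x := by
  unfold phi
  rw [Finset.sum_eq_single i]
  · rw [Pi.single_eq_same]
  · intro b _ hb; rw [Pi.single_eq_of_ne hb, cyc_zero]
  · intro h; exact absurd (Finset.mem_univ i) h

lemma phi_sg (a : Fin k) (ε : ℤ) : phi ℓ (sg ℓ a ε) = cyc ((ε : ZMod (ℓ a))) :=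
  phi_single a _

lemma phi_add_disj {a b : ∀ j, ZMod (ℓ j)} (h : ∀ t, a t = 0 ∨ b t = 0) :
    phi ℓ (a + b) = phi ℓ a + phi ℓ b := by
  unfold phi
  rw [← Finset.sum_add_distrib]
  apply Finset.sum_congr rfl
  intro t _
  rcases h t with h | h <;> rw [Pi.add_apply, h] <;> rw [cyc_zero] <;> ring_nf <;> simp

lemma phi_pair {a b : Fin k} (h : a ≠ b) (x : ℤ) (y : ℤ) :
    phi ℓ (sg ℓ a x + sg ℓ b y) = cyc ((x : ZMod (ℓ a))) + cyc ((y : ZMod (ℓ b))) := by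
  rw [phi_add_disj, phi_sg, phi_sg]
  intro t
  by_cases ht : t = a
  · subst ht; exact Or.inr (sg_apply_ne h _)
  · exact Or.inl (sg_apply_ne ht _)

lemma phi_triple {a b c : Fin k} (hab : a ≠ b) (hac : a ≠ c) (hbc : b ≠ c)
    (x y w : ℤ) :
    phi ℓ (sg ℓ a x + sg ℓ b y + sg ℓ c w)
      = cyc ((x : ZMod (ℓ a))) + cyc ((y : ZMod (ℓ b))) + cyc ((w : ZMod (ℓ c))) := by
  rw [phi_add_disj, phi_pair hab, phi_sg]
  intro t
  by_cases ht : t = c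
  · subst ht
    left
    rw [Pi.add_apply, sg_apply_ne (Ne.symm hac), sg_apply_ne (Ne.symm hbc), add_zero]
  · exact Or.inr (sg_apply_ne ht _)



/-! ### graph lemmas -/

lemma unit_sg (i : Fin k) : unitVec ℓ i = sg ℓ i 1 := by
  funext j
  by_cases h : j = i
  · subst h
    rw [sg_apply_same, Int.cast_one]
    simp [unitVec]
  · rw [sg_apply_ne h]
    simp [unitVec, h]

lemma smul_unit (i : Fin k) (r : ℕ) : r • unitVec ℓ i = sg ℓ i (r : ℤ) := by
  funext j
  rw [Pi.smul_apply]
  by_cases h : j = i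
  · subst h
    rw [sg_apply_same]
    simp [unitVec]
  · rw [sg_apply_ne h]
    simp [unitVec, h]

lemma adj_iff (h6 : ∀ i, 6 ≤ ℓ i) {u v : ∀ j, ZMod (ℓ j)} :
    (torusGraph ℓ).Adj u v ↔
      ∃ (a : Fin k) (ε : ℤ), (ε = 1 ∨ ε = -1) ∧ u - v = sg ℓ a ε := by
  rw [torusGraph, SimpleGraph.fromRel_adj]
  constructor
  · rintro ⟨hne, h | h⟩ <;> obtain ⟨i, hi⟩ := h
    · exact ⟨i, 1, Or.inl rfl, by rw [hi, unit_sg]⟩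
    · refine ⟨i, -1, Or.inr rfl, ?_⟩
      have h1 : u - v = -(v - u) := by ring
      rw [h1, hi, unit_sg, ← sg_neg]
  · rintro ⟨a, ε, hε, hd⟩
    have hne : u ≠ v := by
      intro h
      rw [h, sub_self] at hd
      have h2 := congrFun hd a
      rw [sg_apply_same, Pi.zero_apply] at h2
      have h3 : ((0 : ℤ) : ZMod (ℓ a)) = ((ε : ℤ) : ZMod (ℓ a)) := by
        rw [← h2]; push_cast; ring
      have := zmod_inj (h6 a) h3 (by simp) (natAbs_sign hε)
      rcases hε with rfl | rfl <;> omega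
    refine ⟨hne, ?_⟩
    rcases hε with rfl | rfl
    · left
      exact ⟨a, by rw [hd, unit_sg]⟩
    · right
      refine ⟨a, ?_⟩
      have h1 : v - u = -(u - v) := by ring
      rw [h1, hd, unit_sg, ← sg_neg]
      norm_num

lemma phi_split (i : Fin k) (v : ∀ j, ZMod (ℓ j)) :
    phi ℓ v = (∑ j ∈ Finset.univ.erase i, cyc (v j)) + cyc (v i) :=
  (Finset.sum_erase_add _ _ (Finset.mem_univ i)).symm

lemma phi_adj (h6 : ∀ i, 6 ≤ ℓ i) {u v : ∀ j, ZMod (ℓ j)}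
    (h : (torusGraph ℓ).Adj u v) : phi ℓ v ≤ phi ℓ u + 1 := by
  obtain ⟨a, ε, hε, hd⟩ := (adj_iff h6).1 h
  have hv : v = u - sg ℓ a ε := by rw [← hd]; ring
  have hva : v a = u a - ((ε : ℤ) : ZMod (ℓ a)) := by
    rw [hv, Pi.sub_apply, sg_apply_same]
  have hvj : ∀ j, j ≠ a → v j = u j := by
    intro j hj
    rw [hv, Pi.sub_apply, sg_apply_ne hj, sub_zero]
  rw [phi_split a v, phi_split a u]
  have hsum : (∑ j ∈ Finset.univ.erase a, cyc (v j)) = ∑ j ∈ Finset.univ.erase a, cyc (u j) :=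
    Finset.sum_congr rfl (fun j hj => by rw [hvj j (Finset.ne_of_mem_erase hj)])
  have hc : cyc (v a) ≤ cyc (u a) + 1 := by
    rw [hva]; exact cyc_sub_sign_le (h6 a) hε (u a)
  omega

lemma phi_le_walk (h6 : ∀ i, 6 ≤ ℓ i) {u v : ∀ j, ZMod (ℓ j)}
    (W : (torusGraph ℓ).Walk u v) : phi ℓ v ≤ phi ℓ u + W.length := by
  induction W with
  | nil => simp
  | cons h p ih =>
      rename_i x y w
      have h1 := phi_adj h6 h
      rw [SimpleGraph.Walk.length_cons]
      omega

lemma exists_walk (h6 : ∀ i, 6 ≤ ℓ i) (v : ∀ j, ZMod (ℓ j)) :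
    ∃ W : (torusGraph ℓ).Walk 0 v, W.length = phi ℓ v := by
  generalize hd : phi ℓ v = d
  induction d generalizing v with
  | zero =>
    have hv : v = 0 := by
      funext i
      have h0 : cyc (v i) = 0 := Finset.sum_eq_zero_iff.1 hd i (Finset.mem_univ i)
      have hlt : (v i).val < ℓ i := by
        haveI : NeZero (ℓ i) := ⟨by have := h6 i; omega⟩
        exact ZMod.val_lt (v i)
      have hval : (v i).val = 0 := by unfold cyc at h0; omega
      exact (ZMod.val_eq_zero _).1 hval
    subst hv
    exact ⟨SimpleGraph.Walk.nil, rfl⟩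
  | succ d ih =>
    have hex : ∃ i, (v i).val ≠ 0 := by
      by_contra hcon
      push_neg at hcon
      have h0 : phi ℓ v = 0 :=
        Finset.sum_eq_zero (fun i _ => by unfold cyc; rw [hcon i]; omega)
      omega
    obtain ⟨i, hi⟩ := hex
    have hn := h6 i
    haveI : NeZero (ℓ i) := ⟨by omega⟩
    have hlt := ZMod.val_lt (v i)
    by_cases hc : 2 * (v i).val ≤ ℓ i
    · set u : ∀ j, ZMod (ℓ j) := v - sg ℓ i 1 with hu
      have hadj : (torusGraph ℓ).Adj u v := by
        refine (adj_iff h6).2 ⟨i, -1, Or.inr rfl, ?_⟩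
        rw [hu]
        have h1 : v - sg ℓ i 1 - v = -sg ℓ i 1 := by ring
        rw [h1, ← sg_neg]
      have hui : u i = v i - 1 := by
        rw [hu, Pi.sub_apply, sg_apply_same, Int.cast_one]
      have huj : ∀ j, j ≠ i → u j = v j := fun j hj => by
        rw [hu, Pi.sub_apply, sg_apply_ne hj, sub_zero]
      have hval : (u i).val = (v i).val - 1 := by
        rw [hui, val_sub_one hn, if_neg (by omega)]
      have hcu : cyc (u i) + 1 = cyc (v i) := by
        unfold cyc
        rw [hval]
        omega
      have hphiu : phi ℓ u = d := by
        rw [phi_split i u, phi_split i v] at *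
        have hsum : (∑ j ∈ Finset.univ.erase i, cyc (u j))
            = ∑ j ∈ Finset.univ.erase i, cyc (v j) :=
          Finset.sum_congr rfl (fun j hj => by rw [huj j (Finset.ne_of_mem_erase hj)])
        omega
      obtain ⟨W, hW⟩ := ih u hphiu
      exact ⟨W.concat hadj, by rw [SimpleGraph.Walk.length_concat, hW]⟩
    · set u : ∀ j, ZMod (ℓ j) := v + sg ℓ i 1 with hu
      have hadj : (torusGraph ℓ).Adj u v := by
        refine (adj_iff h6).2 ⟨i, 1, Or.inl rfl, ?_⟩
        rw [hu]; ring
      have hui : u i = v i + 1 := by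
        rw [hu, Pi.add_apply, sg_apply_same, Int.cast_one]
      have huj : ∀ j, j ≠ i → u j = v j := fun j hj => by
        rw [hu, Pi.add_apply, sg_apply_ne hj, add_zero]
      have hval : (u i).val = if (v i).val + 1 = ℓ i then 0 else (v i).val + 1 := by
        rw [hui]; exact val_add_one hn (v i)
      have hcu : cyc (u i) + 1 = cyc (v i) := by
        unfold cyc
        by_cases ht : (v i).val + 1 = ℓ i
        · rw [if_pos ht] at hval
          rw [hval]
          omega
        · rw [if_neg ht] at hval
          rw [hval]
          omega
      have hphiu : phi ℓ u = d := by
        rw [phi_split i u, phi_split i v] at *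
        have hsum : (∑ j ∈ Finset.univ.erase i, cyc (u j))
            = ∑ j ∈ Finset.univ.erase i, cyc (v j) :=
          Finset.sum_congr rfl (fun j hj => by rw [huj j (Finset.ne_of_mem_erase hj)])
        omega
      obtain ⟨W, hW⟩ := ih u hphiu
      exact ⟨W.concat hadj, by rw [SimpleGraph.Walk.length_concat, hW]⟩

lemma dist_eq_phi (h6 : ∀ i, 6 ≤ ℓ i) (v : ∀ j, ZMod (ℓ j)) :
    (torusGraph ℓ).dist 0 v = phi ℓ v := by
  obtain ⟨W, hW⟩ := exists_walk h6 v
  have h1 : (torusGraph ℓ).dist 0 v ≤ phi ℓ v := hW ▸ SimpleGraph.dist_le W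
  have h2 : phi ℓ v ≤ (torusGraph ℓ).dist 0 v := by
    obtain ⟨p, hp⟩ := (SimpleGraph.Walk.reachable W).exists_walk_length_eq_dist
    have := phi_le_walk h6 p
    rw [phi_zero] at this
    omega
  omega



/-! ### solving single-vector equations -/

lemma solveA (h6 : ∀ i, 6 ≤ ℓ i) {a b j : Fin k} {α β τ : ℤ}
    (hα : α = 1 ∨ α = -1) (hβ : β = 1 ∨ β = -1) (hτ : τ = 1 ∨ τ = -1)
    (eq : sg ℓ b β - sg ℓ a α = sg ℓ j (τ + τ)) : a = j ∧ α = -τ := by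
  have haj : a = j := by
    by_contra haj
    by_cases hba : b = a
    · subst hba
      have e1 := congrFun eq b
      rw [Pi.sub_apply, sg_apply_same, sg_apply_same, sg_apply_ne haj] at e1
      have e1' : ((β - α : ℤ) : ZMod (ℓ b)) = ((0 : ℤ) : ZMod (ℓ b)) := by
        push_cast
        linear_combination e1
      have hba' := zmod_inj (h6 b) e1'
        (by rcases hα with rfl|rfl <;> rcases hβ with rfl|rfl <;> simp) (by simp)
      have hβα : β = α := by omega
      subst hβα
      rw [sub_self] at eq
      have e2 := congrFun eq.symm j
      rw [sg_apply_same, Pi.zero_apply] at e2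
      have e2' : ((τ + τ : ℤ) : ZMod (ℓ j)) = ((0 : ℤ) : ZMod (ℓ j)) := by
        push_cast at e2 ⊢
        linear_combination e2
      have := zmod_inj (h6 j) e2' (by rcases hτ with rfl|rfl <;> simp) (by simp)
      rcases hτ with rfl|rfl <;> omega
    · have e1 := congrFun eq a
      rw [Pi.sub_apply, sg_apply_ne (fun h => hba h.symm), sg_apply_same,
        sg_apply_ne haj] at e1
      have e1' : ((-α : ℤ) : ZMod (ℓ a)) = ((0 : ℤ) : ZMod (ℓ a)) := by
        push_cast
        linear_combination e1
      have := zmod_inj (h6 a) e1' (by rcases hα with rfl|rfl <;> simp) (by simp)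
      rcases hα with rfl|rfl <;> omega
  subst haj
  have hbj : b = a := by
    by_contra hbj
    have e1 := congrFun eq b
    rw [Pi.sub_apply, sg_apply_same, sg_apply_ne hbj, sg_apply_ne hbj] at e1
    have e1' : ((β : ℤ) : ZMod (ℓ b)) = ((0 : ℤ) : ZMod (ℓ b)) := by
      push_cast
      linear_combination e1
    have := zmod_inj (h6 b) e1' (natAbs_sign hβ) (by simp)
    rcases hβ with rfl|rfl <;> omega
  subst hbj
  refine ⟨rfl, ?_⟩
  have e1 := congrFun eq b
  rw [Pi.sub_apply, sg_apply_same, sg_apply_same, sg_apply_same] at e1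
  have e1' : ((β - α : ℤ) : ZMod (ℓ b)) = ((τ + τ : ℤ) : ZMod (ℓ b)) := by
    push_cast at e1 ⊢
    linear_combination e1
  have := zmod_inj (h6 b) e1'
    (by rcases hα with rfl|rfl <;> rcases hβ with rfl|rfl <;> simp)
    (by rcases hτ with rfl|rfl <;> simp)
  rcases hα with rfl|rfl <;> rcases hβ with rfl|rfl <;> rcases hτ with rfl|rfl <;> omega

lemma solveB (h6 : ∀ i, 6 ≤ ℓ i) {a b j z : Fin k} {α β τ ζ : ℤ} (hjz : j ≠ z)
    (hα : α = 1 ∨ α = -1) (hβ : β = 1 ∨ β = -1) (hτ : τ = 1 ∨ τ = -1) (hζ : ζ = 1 ∨ ζ = -1)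
    (eq : sg ℓ b β - sg ℓ a α = sg ℓ j τ + sg ℓ z ζ) :
    (a = z ∧ b = j ∧ α = -ζ ∧ β = τ) ∨ (a = j ∧ b = z ∧ α = -τ ∧ β = ζ) := by
  by_cases hab : a = b
  · exfalso
    subst hab
    by_cases hja : j = a
    · have hza : z ≠ a := fun h => hjz (hja.trans h.symm)
      have e2 := congrFun eq z
      rw [Pi.sub_apply, Pi.add_apply, sg_apply_ne hza, sg_apply_ne hza,
        sg_apply_ne (Ne.symm hjz), sg_apply_same] at e2
      have e2' : ((0 : ℤ) : ZMod (ℓ z)) = ((ζ : ℤ) : ZMod (ℓ z)) := by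
        push_cast
        linear_combination e2
      have := zmod_inj (h6 z) e2' (by simp) (natAbs_sign hζ)
      rcases hζ with rfl|rfl <;> omega
    · have e1 := congrFun eq j
      rw [Pi.sub_apply, Pi.add_apply, sg_apply_ne hja, sg_apply_ne hja,
        sg_apply_same, sg_apply_ne hjz] at e1
      have e1' : ((0 : ℤ) : ZMod (ℓ j)) = ((τ : ℤ) : ZMod (ℓ j)) := by
        push_cast
        linear_combination e1
      have := zmod_inj (h6 j) e1' (by simp) (natAbs_sign hτ)
      rcases hτ with rfl|rfl <;> omega
  · have ea := congrFun eq a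
    rw [Pi.sub_apply, Pi.add_apply, sg_apply_ne hab, sg_apply_same] at ea
    have eb := congrFun eq b
    rw [Pi.sub_apply, Pi.add_apply, sg_apply_same, sg_apply_ne (Ne.symm hab)] at eb
    by_cases haj : a = j
    · subst haj
      have haz : a ≠ z := hjz
      rw [sg_apply_same, sg_apply_ne haz] at ea
      have ea' : ((-α : ℤ) : ZMod (ℓ a)) = ((τ : ℤ) : ZMod (ℓ a)) := by
        push_cast
        linear_combination ea
      have hατ := zmod_inj (h6 a) ea' (by rcases hα with rfl|rfl <;> simp) (natAbs_sign hτ)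
      by_cases hbz : b = z
      · subst hbz
        rw [sg_apply_ne (Ne.symm hab), sg_apply_same] at eb
        have eb' : ((β : ℤ) : ZMod (ℓ b)) = ((ζ : ℤ) : ZMod (ℓ b)) := by
          push_cast
          linear_combination eb
        have hβζ := zmod_inj (h6 b) eb' (natAbs_sign hβ) (natAbs_sign hζ)
        exact Or.inr ⟨rfl, rfl, by omega, hβζ⟩
      · exfalso
        rw [sg_apply_ne (Ne.symm hab), sg_apply_ne hbz] at eb
        have eb' : ((β : ℤ) : ZMod (ℓ b)) = ((0 : ℤ) : ZMod (ℓ b)) := by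
          push_cast
          linear_combination eb
        have := zmod_inj (h6 b) eb' (natAbs_sign hβ) (by simp)
        rcases hβ with rfl|rfl <;> omega
    · by_cases haz : a = z
      · subst haz
        rw [sg_apply_ne haj, sg_apply_same] at ea
        have ea' : ((-α : ℤ) : ZMod (ℓ a)) = ((ζ : ℤ) : ZMod (ℓ a)) := by
          push_cast
          linear_combination ea
        have hαζ := zmod_inj (h6 a) ea' (by rcases hα with rfl|rfl <;> simp) (natAbs_sign hζ)
        by_cases hbj : b = j
        · subst hbj
          rw [sg_apply_same, sg_apply_ne (Ne.symm hab)] at eb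
          have eb' : ((β : ℤ) : ZMod (ℓ b)) = ((τ : ℤ) : ZMod (ℓ b)) := by
            push_cast
            linear_combination eb
          have hβτ := zmod_inj (h6 b) eb' (natAbs_sign hβ) (natAbs_sign hτ)
          exact Or.inl ⟨rfl, rfl, by omega, hβτ⟩
        · exfalso
          rw [sg_apply_ne hbj, sg_apply_ne (Ne.symm hab)] at eb
          have eb' : ((β : ℤ) : ZMod (ℓ b)) = ((0 : ℤ) : ZMod (ℓ b)) := by
            push_cast
            linear_combination eb
          have := zmod_inj (h6 b) eb' (natAbs_sign hβ) (by simp)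
          rcases hβ with rfl|rfl <;> omega
      · exfalso
        rw [sg_apply_ne haj, sg_apply_ne haz] at ea
        have ea' : ((-α : ℤ) : ZMod (ℓ a)) = ((0 : ℤ) : ZMod (ℓ a)) := by
          push_cast
          linear_combination ea
        have := zmod_inj (h6 a) ea' (by rcases hα with rfl|rfl <;> simp) (by simp)
        rcases hα with rfl|rfl <;> omega

lemma cn_opp (h6 : ∀ i, 6 ≤ ℓ i) {p x : ∀ j, ZMod (ℓ j)} {j : Fin k} {τ : ℤ}
    (hτ : τ = 1 ∨ τ = -1)
    (h1 : (torusGraph ℓ).Adj x (p + sg ℓ j τ))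
    (h2 : (torusGraph ℓ).Adj x (p - sg ℓ j τ)) : x = p := by
  obtain ⟨a, α, hα, hA⟩ := (adj_iff h6).1 h1
  obtain ⟨b, β, hβ, hB⟩ := (adj_iff h6).1 h2
  have eq : sg ℓ b β - sg ℓ a α = sg ℓ j (τ + τ) := by
    rw [← hA, ← hB, ← sg_add]
    ring
  obtain ⟨haj, hα'⟩ := solveA h6 hα hβ hτ eq
  subst haj
  subst hα'
  rw [sg_neg] at hA
  have h3 := sub_eq_iff_eq_add.mp hA
  rw [h3]
  abel

lemma cn_two (h6 : ∀ i, 6 ≤ ℓ i) {p x : ∀ j, ZMod (ℓ j)} {j z : Fin k} {τ : ℤ}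
    (hjz : j ≠ z) (hτ : τ = 1 ∨ τ = -1)
    (h1 : (torusGraph ℓ).Adj x (p + sg ℓ z 1))
    (h2 : (torusGraph ℓ).Adj x (p + sg ℓ j τ)) :
    x = p ∨ x = p + sg ℓ z 1 + sg ℓ j τ := by
  obtain ⟨a, α, hα, hA⟩ := (adj_iff h6).1 h1
  obtain ⟨b, β, hβ, hB⟩ := (adj_iff h6).1 h2
  have eq : sg ℓ b β - sg ℓ a α = sg ℓ j (-τ) + sg ℓ z 1 := by
    rw [← hA, ← hB, sg_neg]
    ring
  rcases solveB h6 hjz hα hβ (by rcases hτ with rfl|rfl <;> simp) (Or.inl rfl) eq with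
    ⟨haz, hbj, hα', hβ'⟩ | ⟨haj, hbz, hα', hβ'⟩
  · subst haz
    have hα1 : α = -1 := by omega
    subst hα1
    left
    have h3 := sub_eq_iff_eq_add.mp hA
    rw [h3, sg_neg]
    abel
  · subst hbz
    have hβ1 : β = 1 := by omega
    subst hβ1
    right
    have h3 := sub_eq_iff_eq_add.mp hB
    rw [h3]
    abel



/-! ### homomorphism lemmas -/

lemma neg_sign {ε : ℤ} (hε : ε = 1 ∨ ε = -1) : -ε = 1 ∨ -ε = -1 := by
  rcases hε with rfl|rfl <;> simp

lemma M1 (h6 : ∀ i, 6 ≤ ℓ i) (f : torusGraph ℓ →g torusGraph ℓ) {i₁ z : Fin k}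
    (hphi : ∀ v, phi ℓ (f v) = phi ℓ v)
    (hfe : f (sg ℓ i₁ 1) = sg ℓ z 1)
    (hbij : Set.BijOn ⇑f ((torusGraph ℓ).neighborSet (sg ℓ i₁ 1))
      ((torusGraph ℓ).neighborSet (sg ℓ z 1)))
    (h2e : f (sg ℓ i₁ 1 + sg ℓ i₁ 1) = sg ℓ z 1 + sg ℓ z 1)
    {m : Fin k} {ε : ℤ} (hm : m ≠ i₁) (hε : ε = 1 ∨ ε = -1) :
    ∃ j τ, j ≠ z ∧ (τ = 1 ∨ τ = -1) ∧
      f (sg ℓ i₁ 1 + sg ℓ m ε) = sg ℓ z 1 + sg ℓ j τ := by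
  have hadj : (torusGraph ℓ).Adj (sg ℓ i₁ 1 + sg ℓ m ε) (sg ℓ i₁ 1) :=
    (adj_iff h6).2 ⟨m, ε, hε, by ring⟩
  have h' := f.map_adj hadj
  rw [hfe] at h'
  obtain ⟨a, α, hα, hd⟩ := (adj_iff h6).1 h'
  have hx : f (sg ℓ i₁ 1 + sg ℓ m ε) = sg ℓ z 1 + sg ℓ a α := by
    have h3 := sub_eq_iff_eq_add.mp hd
    rw [h3]
    abel
  by_cases haz : a = z
  · exfalso
    rw [haz] at hx
    rcases hα with rfl | rfl
    · have hmem1 : (sg ℓ i₁ 1 + sg ℓ m ε) ∈ (torusGraph ℓ).neighborSet (sg ℓ i₁ 1) := by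
        rw [SimpleGraph.mem_neighborSet]
        exact (adj_iff h6).2 ⟨m, -ε, neg_sign hε, by rw [sg_neg]; ring⟩
      have hmem2 : (sg ℓ i₁ 1 + sg ℓ i₁ 1) ∈ (torusGraph ℓ).neighborSet (sg ℓ i₁ 1) := by
        rw [SimpleGraph.mem_neighborSet]
        exact (adj_iff h6).2 ⟨i₁, -1, Or.inr rfl, by rw [sg_neg]; ring⟩
      have heq := hbij.injOn hmem1 hmem2 (hx.trans h2e.symm)
      have e1 := congrFun heq m
      rw [Pi.add_apply, Pi.add_apply, sg_apply_ne hm, sg_apply_same] at e1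
      have e1' : ((ε : ℤ) : ZMod (ℓ m)) = ((0 : ℤ) : ZMod (ℓ m)) := by
        push_cast at e1 ⊢
        linear_combination e1
      have := zmod_inj (h6 m) e1' (natAbs_sign hε) (by simp)
      rcases hε with rfl|rfl <;> omega
    · have h0 : sg ℓ z 1 + sg ℓ z (-1) = 0 := by
        rw [sg_add, show (1 + (-1) : ℤ) = 0 by norm_num, sg_zero]
      rw [h0] at hx
      have hp := hphi (sg ℓ i₁ 1 + sg ℓ m ε)
      rw [hx, phi_zero, phi_pair (Ne.symm hm), cyc_sign (h6 i₁) (Or.inl rfl),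
        cyc_sign (h6 m) hε] at hp
      omega
  · exact ⟨a, α, haz, hα, hx⟩

lemma Msurj (h6 : ∀ i, 6 ≤ ℓ i) (f : torusGraph ℓ →g torusGraph ℓ) {i₁ z : Fin k}
    (hf0 : f 0 = 0)
    (hbij : Set.BijOn ⇑f ((torusGraph ℓ).neighborSet (sg ℓ i₁ 1))
      ((torusGraph ℓ).neighborSet (sg ℓ z 1)))
    (h2e : f (sg ℓ i₁ 1 + sg ℓ i₁ 1) = sg ℓ z 1 + sg ℓ z 1)
    {j : Fin k} {τ : ℤ} (hj : j ≠ z) (hτ : τ = 1 ∨ τ = -1) :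
    ∃ m ε, m ≠ i₁ ∧ (ε = 1 ∨ ε = -1) ∧
      f (sg ℓ i₁ 1 + sg ℓ m ε) = sg ℓ z 1 + sg ℓ j τ := by
  have hmemT : (sg ℓ z 1 + sg ℓ j τ) ∈ (torusGraph ℓ).neighborSet (sg ℓ z 1) := by
    rw [SimpleGraph.mem_neighborSet]
    exact (adj_iff h6).2 ⟨j, -τ, neg_sign hτ, by rw [sg_neg]; ring⟩
  obtain ⟨y, hyN, hfy⟩ := hbij.surjOn hmemT
  rw [SimpleGraph.mem_neighborSet] at hyN
  obtain ⟨a, α, hα, hd⟩ := (adj_iff h6).1 hyN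
  have hy : y = sg ℓ i₁ 1 + sg ℓ a (-α) := by
    have h3 : y = sg ℓ i₁ 1 - sg ℓ a α := by rw [← hd]; ring
    rw [h3, sg_neg]
    ring
  by_cases hai : a = i₁
  · exfalso
    rw [hai] at hy
    rcases hα with rfl | rfl
    · have hy0 : y = 0 := by
        rw [hy, sg_add, show (1 + (-1) : ℤ) = 0 by norm_num, sg_zero]
      rw [hy0, hf0] at hfy
      have e1 := congrFun hfy.symm z
      rw [Pi.zero_apply, Pi.add_apply, sg_apply_same, sg_apply_ne (Ne.symm hj)] at e1
      have e1' : ((1 : ℤ) : ZMod (ℓ z)) = ((0 : ℤ) : ZMod (ℓ z)) := by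
        push_cast at e1 ⊢
        linear_combination e1
      have := zmod_inj (h6 z) e1' (by simp) (by simp)
      omega
    · have hy2 : y = sg ℓ i₁ 1 + sg ℓ i₁ 1 := by
        rw [hy]
        norm_num
      rw [hy2, h2e] at hfy
      have e1 := congrFun hfy j
      rw [Pi.add_apply, Pi.add_apply, sg_apply_ne hj, sg_apply_same] at e1
      have e1' : ((0 : ℤ) : ZMod (ℓ j)) = ((τ : ℤ) : ZMod (ℓ j)) := by
        push_cast at e1 ⊢
        linear_combination e1
      have := zmod_inj (h6 j) e1' (by simp) (natAbs_sign hτ)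
      rcases hτ with rfl|rfl <;> omega
  · exact ⟨a, -α, hai, neg_sign hα, by rw [← hy]; exact hfy⟩

lemma M2 (h6 : ∀ i, 6 ≤ ℓ i) (f : torusGraph ℓ →g torusGraph ℓ) {i₁ z : Fin k}
    (hphi : ∀ v, phi ℓ (f v) = phi ℓ v)
    {m m' j : Fin k} {ε ε' τ : ℤ}
    (hm : m ≠ i₁) (hm' : m' ≠ i₁) (hε : ε = 1 ∨ ε = -1) (hε' : ε' = 1 ∨ ε' = -1)
    (hj : j ≠ z) (hτ : τ = 1 ∨ τ = -1)
    (H1 : f (sg ℓ i₁ 1 + sg ℓ m ε) = sg ℓ z 1 + sg ℓ j τ)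
    (H2 : f (sg ℓ i₁ 1 + sg ℓ m' ε') = sg ℓ z 1 + sg ℓ j (-τ)) :
    m' = m ∧ ε' = -ε := by
  by_cases hmm : m' = m
  · subst hmm
    refine ⟨rfl, ?_⟩
    by_cases hee : ε' = ε
    · exfalso
      subst hee
      have h3 : sg ℓ z 1 + sg ℓ j τ = sg ℓ z 1 + sg ℓ j (-τ) := by rw [← H1, H2]
      have h4 := add_left_cancel h3
      have e1 := congrFun h4 j
      rw [sg_apply_same, sg_apply_same] at e1
      have e1' : ((τ : ℤ) : ZMod (ℓ j)) = ((-τ : ℤ) : ZMod (ℓ j)) := by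
        push_cast at e1 ⊢
        linear_combination e1
      have := zmod_inj (h6 j) e1' (natAbs_sign hτ) (natAbs_sign (neg_sign hτ))
      rcases hτ with rfl|rfl <;> omega
    · rcases hε with rfl|rfl <;> rcases hε' with rfl|rfl <;> omega
  · exfalso
    set q := sg ℓ i₁ 1 + sg ℓ m ε + sg ℓ m' ε' with hq
    have adj1 : (torusGraph ℓ).Adj q (sg ℓ i₁ 1 + sg ℓ m ε) :=
      (adj_iff h6).2 ⟨m', ε', hε', by rw [hq]; ring⟩
    have adj2 : (torusGraph ℓ).Adj q (sg ℓ i₁ 1 + sg ℓ m' ε') :=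
      (adj_iff h6).2 ⟨m, ε, hε, by rw [hq]; ring⟩
    have f1 := f.map_adj adj1
    rw [H1] at f1
    have f2 := f.map_adj adj2
    rw [H2] at f2
    have h5 : sg ℓ z 1 + sg ℓ j (-τ) = sg ℓ z 1 - sg ℓ j τ := by rw [sg_neg]; ring
    rw [h5] at f2
    have hfq := cn_opp h6 hτ f1 f2
    have hp := hphi q
    rw [hfq, phi_sg] at hp
    have hq3 : phi ℓ q = 3 := by
      rw [hq, phi_triple (Ne.symm hm) (Ne.symm hm') (fun h => hmm h.symm),
        cyc_sign (h6 i₁) (Or.inl rfl), cyc_sign (h6 m) hε, cyc_sign (h6 m') hε']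
    rw [hq3, cyc_sign (h6 z) (Or.inl rfl)] at hp
    omega

lemma M3 (h6 : ∀ i, 6 ≤ ℓ i) (f : torusGraph ℓ →g torusGraph ℓ) {i₁ z : Fin k}
    (hf0 : f 0 = 0)
    (hphi : ∀ v, phi ℓ (f v) = phi ℓ v)
    (hbij : Set.BijOn ⇑f ((torusGraph ℓ).neighborSet (sg ℓ i₁ 1))
      ((torusGraph ℓ).neighborSet (sg ℓ z 1)))
    (h2e : f (sg ℓ i₁ 1 + sg ℓ i₁ 1) = sg ℓ z 1 + sg ℓ z 1)
    {m j : Fin k} {ε τ : ℤ}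
    (hm : m ≠ i₁) (hε : ε = 1 ∨ ε = -1) (hj : j ≠ z) (hτ : τ = 1 ∨ τ = -1)
    (H1 : f (sg ℓ i₁ 1 + sg ℓ m ε) = sg ℓ z 1 + sg ℓ j τ) :
    f (sg ℓ i₁ 1 + sg ℓ m (-ε)) = sg ℓ z 1 + sg ℓ j (-τ) := by
  obtain ⟨m'', ε'', hm'', hε'', hs⟩ := Msurj h6 f hf0 hbij h2e hj (neg_sign hτ)
  obtain ⟨hm2, he2⟩ := M2 h6 f hphi hm hm'' hε hε'' hj hτ H1 hs
  rw [hm2, he2] at hs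
  exact hs



lemma key (h6 : ∀ i, 6 ≤ ℓ i) (f : torusGraph ℓ →g torusGraph ℓ) {i₁ z : Fin k}
    (hf0 : f 0 = 0)
    (hphi : ∀ v, phi ℓ (f v) = phi ℓ v)
    (hfe : f (sg ℓ i₁ 1) = sg ℓ z 1)
    (hbij : Set.BijOn ⇑f ((torusGraph ℓ).neighborSet (sg ℓ i₁ 1))
      ((torusGraph ℓ).neighborSet (sg ℓ z 1)))
    (h2e : f (sg ℓ i₁ 1 + sg ℓ i₁ 1) = sg ℓ z 1 + sg ℓ z 1) :
    ∀ r : ℕ, 1 ≤ r → r ≤ ℓ i₁ / 2 → f (sg ℓ i₁ (r : ℤ)) = sg ℓ z (r : ℤ) := by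
  haveI : NeZero (ℓ i₁) := ⟨by have := h6 i₁; omega⟩
  haveI : NeZero (ℓ z) := ⟨by have := h6 z; omega⟩
  have KEY : ∀ r : ℕ, 1 ≤ r → r ≤ ℓ i₁ / 2 →
      f (sg ℓ i₁ (r : ℤ)) = sg ℓ z (r : ℤ) ∧
      ∀ m (ε : ℤ), m ≠ i₁ → (ε = 1 ∨ ε = -1) →
        ∃ j τ, j ≠ z ∧ (τ = 1 ∨ τ = -1) ∧
          f (sg ℓ i₁ (r : ℤ) + sg ℓ m ε) = sg ℓ z (r : ℤ) + sg ℓ j τ ∧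
          f (sg ℓ i₁ 1 + sg ℓ m ε) = sg ℓ z 1 + sg ℓ j τ := by
    intro r
    induction r with
    | zero => intro h; omega
    | succ n ih =>
      intro _ hle
      have h2n1 : 2 * (n + 1) ≤ ℓ i₁ := by omega
      by_cases hn : n = 0
      · subst hn
        constructor
        · norm_num
          exact hfe
        · intro m ε hm hε
          obtain ⟨j, τ, hj, hτ, hE⟩ := M1 h6 f hphi hfe hbij h2e hm hε
          refine ⟨j, τ, hj, hτ, ?_, hE⟩
          norm_num
          exact hE
      · have hn1 : 1 ≤ n := by omega
        obtain ⟨IH1, IH2⟩ := ih (by omega) (by omega)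
        have hadj : (torusGraph ℓ).Adj (sg ℓ i₁ ((n + 1 : ℕ) : ℤ)) (sg ℓ i₁ ((n : ℕ) : ℤ)) := by
          refine (adj_iff h6).2 ⟨i₁, 1, Or.inl rfl, ?_⟩
          rw [sg_sub]
          congr 1
          push_cast
          ring
        have hw := f.map_adj hadj
        rw [IH1] at hw
        obtain ⟨a, α, hα, hd⟩ := (adj_iff h6).1 hw
        have hwx : f (sg ℓ i₁ ((n + 1 : ℕ) : ℤ)) = sg ℓ z ((n : ℕ) : ℤ) + sg ℓ a α := by
          have h3 := sub_eq_iff_eq_add.mp hd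
          rw [h3]
          abel
        have hcastn1 : ((((n + 1 : ℕ) : ℤ)) : ZMod (ℓ i₁)) = (((n + 1 : ℕ)) : ZMod (ℓ i₁)) := by
          push_cast
          ring
        have hphiw : phi ℓ (f (sg ℓ i₁ ((n + 1 : ℕ) : ℤ))) = n + 1 := by
          rw [hphi, phi_sg, hcastn1, cyc_cast h2n1]
        have hcyczn := cyc_cast_le (n := ℓ z) n
        have hcastzn : ((((n : ℕ) : ℤ)) : ZMod (ℓ z)) = (((n : ℕ)) : ZMod (ℓ z)) := by
          push_cast
          ring
        have hMAIN : f (sg ℓ i₁ ((n + 1 : ℕ) : ℤ)) = sg ℓ z ((n + 1 : ℕ) : ℤ) := by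
          by_cases haz : a = z
          · rw [haz] at hwx
            rcases hα with rfl | rfl
            · rw [hwx, sg_add, show ((n:ℤ) + 1) = ((n+1:ℕ):ℤ) by omega]
            · exfalso
              have hww : f (sg ℓ i₁ ((n + 1 : ℕ) : ℤ)) = sg ℓ z ((n - 1 : ℕ) : ℤ) := by
                rw [hwx, sg_add, show ((n:ℤ) + -1) = ((n-1:ℕ):ℤ) by omega]
              rw [hww, phi_sg] at hphiw
              have hcast2 : ((((n - 1 : ℕ) : ℤ)) : ZMod (ℓ z)) = (((n - 1 : ℕ)) : ZMod (ℓ z)) := by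
                push_cast
                ring
              rw [hcast2] at hphiw
              have := cyc_cast_le (n := ℓ z) (n - 1)
              omega
          · exfalso
            obtain ⟨m, ε, hm, hε, hs⟩ := Msurj h6 f hf0 hbij h2e haz hα
            obtain ⟨j', τ', hj', hτ', hra, h1a⟩ := IH2 m ε hm hε
            have hid : sg ℓ j' τ' = sg ℓ a α := add_left_cancel (h1a.symm.trans hs)
            have hra' : f (sg ℓ i₁ ((n : ℕ) : ℤ) + sg ℓ m ε)
                = sg ℓ z ((n : ℕ) : ℤ) + sg ℓ a α := by rw [hra, hid]
            have hs' := M3 h6 f hf0 hphi hbij h2e hm hε haz hα hs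
            obtain ⟨j'', τ'', hj'', hτ'', hrb, h1b⟩ := IH2 m (-ε) hm (neg_sign hε)
            have hid2 : sg ℓ j'' τ'' = sg ℓ a (-α) := add_left_cancel (h1b.symm.trans hs')
            have hrb' : f (sg ℓ i₁ ((n : ℕ) : ℤ) + sg ℓ m (-ε))
                = sg ℓ z ((n : ℕ) : ℤ) - sg ℓ a α := by
              rw [hrb, hid2, sg_neg]
              ring
            set q := sg ℓ i₁ ((n + 1 : ℕ) : ℤ) + sg ℓ m (-ε) with hqdef
            have adjq1 : (torusGraph ℓ).Adj q (sg ℓ i₁ ((n + 1 : ℕ) : ℤ)) :=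
              (adj_iff h6).2 ⟨m, -ε, neg_sign hε, by rw [hqdef]; ring⟩
            have adjq2 : (torusGraph ℓ).Adj q (sg ℓ i₁ ((n : ℕ) : ℤ) + sg ℓ m (-ε)) := by
              refine (adj_iff h6).2 ⟨i₁, 1, Or.inl rfl, ?_⟩
              rw [hqdef]
              have h7 : sg ℓ i₁ ((n + 1 : ℕ) : ℤ) + sg ℓ m (-ε)
                  - (sg ℓ i₁ ((n : ℕ) : ℤ) + sg ℓ m (-ε))
                  = sg ℓ i₁ ((n + 1 : ℕ) : ℤ) - sg ℓ i₁ ((n : ℕ) : ℤ) := by ring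
              rw [h7, sg_sub]
              congr 1
              push_cast
              ring
            have fq1 := f.map_adj adjq1
            rw [hwx] at fq1
            have fq2 := f.map_adj adjq2
            rw [hrb'] at fq2
            have hfq := cn_opp h6 hα fq1 fq2
            have hp := hphi q
            rw [hfq, phi_sg, hcastzn] at hp
            have hq2 : phi ℓ q = n + 2 := by
              rw [hqdef, phi_pair (Ne.symm hm), hcastn1, cyc_cast h2n1,
                cyc_sign (h6 m) (neg_sign hε)]
            omega
        refine ⟨hMAIN, ?_⟩
        intro m ε hm hε
        obtain ⟨j, τ, hj, hτ, hra, h1a⟩ := IH2 m ε hm hε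
        refine ⟨j, τ, hj, hτ, ?_, h1a⟩
        have adjx1 : (torusGraph ℓ).Adj (sg ℓ i₁ ((n + 1 : ℕ) : ℤ) + sg ℓ m ε)
            (sg ℓ i₁ ((n + 1 : ℕ) : ℤ)) := (adj_iff h6).2 ⟨m, ε, hε, by ring⟩
        have adjx2 : (torusGraph ℓ).Adj (sg ℓ i₁ ((n + 1 : ℕ) : ℤ) + sg ℓ m ε)
            (sg ℓ i₁ ((n : ℕ) : ℤ) + sg ℓ m ε) := by
          refine (adj_iff h6).2 ⟨i₁, 1, Or.inl rfl, ?_⟩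
          have h7 : sg ℓ i₁ ((n + 1 : ℕ) : ℤ) + sg ℓ m ε
              - (sg ℓ i₁ ((n : ℕ) : ℤ) + sg ℓ m ε)
              = sg ℓ i₁ ((n + 1 : ℕ) : ℤ) - sg ℓ i₁ ((n : ℕ) : ℤ) := by ring
          rw [h7, sg_sub]
          congr 1
          push_cast
          ring
        have f1 := f.map_adj adjx1
        rw [hMAIN] at f1
        have f2 := f.map_adj adjx2
        rw [hra] at f2
        have hsplit : sg ℓ z ((n + 1 : ℕ) : ℤ) = sg ℓ z ((n : ℕ) : ℤ) + sg ℓ z 1 := by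
          rw [sg_add, show ((n:ℤ) + 1) = ((n+1:ℕ):ℤ) by omega]
        rw [hsplit] at f1
        rcases cn_two h6 hj hτ f1 f2 with hX | hX
        · exfalso
          have hp := hphi (sg ℓ i₁ ((n + 1 : ℕ) : ℤ) + sg ℓ m ε)
          rw [hX, phi_sg, hcastzn, phi_pair (Ne.symm hm), hcastn1, cyc_cast h2n1,
            cyc_sign (h6 m) hε] at hp
          omega
        · rw [hX, hsplit]
  intro r h1 h2
  exact (KEY r h1 h2).1

end TorusAux

/-- the induction-along-a-geodesic step: for a homomorphism `f` of the
even toroidal grid (all `ℓᵢ ≥ 6` even, `k ≥ 2`) to itself fixing the origin, preserving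
distances from the origin, with `f(e_{i₁}) = e₁`, mapping the neighbors of `e_{i₁}`
bijectively to the neighbors of `e₁`, and with `f(2e_{i₁}) = 2e₁`, one has
`f(r·e_{i₁}) = r·e₁` for all `1 ≤ r ≤ ℓ_{i₁}/2`. -/
theorem torus_hom_geodesic {k : ℕ} (hk : 2 ≤ k) (ℓ : Fin k → ℕ)
    (heven : ∀ i, Even (ℓ i)) (h6 : ∀ i, 6 ≤ ℓ i)
    (f : torusGraph ℓ →g torusGraph ℓ) (i₁ : Fin k)
    (hf0 : f 0 = 0)
    (hdist : ∀ v, (torusGraph ℓ).dist 0 (f v) = (torusGraph ℓ).dist 0 v)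
    (hfe : f (unitVec ℓ i₁) = unitVec ℓ ⟨0, by omega⟩)
    (hbij : Set.BijOn ⇑f ((torusGraph ℓ).neighborSet (unitVec ℓ i₁))
      ((torusGraph ℓ).neighborSet (unitVec ℓ ⟨0, by omega⟩)))
    (h2 : f (unitVec ℓ i₁ + unitVec ℓ i₁)
      = unitVec ℓ ⟨0, by omega⟩ + unitVec ℓ ⟨0, by omega⟩) :
    ∀ r : ℕ, 1 ≤ r → r ≤ ℓ i₁ / 2 →
      f (r • unitVec ℓ i₁) = r • unitVec ℓ ⟨0, by omega⟩ := by
  intro r h1 h2r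
  have hphi : ∀ v, TorusAux.phi ℓ (f v) = TorusAux.phi ℓ v := by
    intro v
    rw [← TorusAux.dist_eq_phi h6, ← TorusAux.dist_eq_phi h6, hdist]
  have hfe' : f (TorusAux.sg ℓ i₁ 1) = TorusAux.sg ℓ ⟨0, by omega⟩ 1 := by
    rw [← TorusAux.unit_sg, ← TorusAux.unit_sg]
    exact hfe
  have hbij' : Set.BijOn ⇑f ((torusGraph ℓ).neighborSet (TorusAux.sg ℓ i₁ 1))
      ((torusGraph ℓ).neighborSet (TorusAux.sg ℓ ⟨0, by omega⟩ 1)) := by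
    rw [← TorusAux.unit_sg, ← TorusAux.unit_sg]
    exact hbij
  have h2e' : f (TorusAux.sg ℓ i₁ 1 + TorusAux.sg ℓ i₁ 1)
      = TorusAux.sg ℓ ⟨0, by omega⟩ 1 + TorusAux.sg ℓ ⟨0, by omega⟩ 1 := by
    rw [← TorusAux.unit_sg, ← TorusAux.unit_sg]
    exact h2
  rw [TorusAux.smul_unit, TorusAux.smul_unit]
  exact TorusAux.key h6 f hf0 hphi hfe' hbij' h2e' r h1 h2r
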